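/- Let a, r ∈ ℝ with a² ≤ r² < 1, let P(u) = 1 − 2au + r²u², and for t ∈ ℝ set u = tanh(t/2) and f(t) = log P(u) − log(1−u²). Then f''(t) = ((1−u²)/2)·N(u)/P(u)², where N(u) = (1+r²−2a²) − 2a(1−r²)u + (2a²−r⁴−r²)u². In particular f''(t) > 0 for all t, so f is strictly convex on ℝ. -/

import Mathlib

/-!
With u = tanh (t/2) one has u' = (1 - u²)/2, and the chain rule gives f' = g(u) for the rational
function g(v) = (1 - v²)(r²v - a)/P(v) + v, whose derivative is exactly N(v)/P(v)². Hence
f'' = u' · N(u)/P(u)². Positivity comes from two sum-of-squares identities: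
P(u) = (1 - au)² + (r² - a²)u², and N(u) is a combination of (u - a)², 1 - u² and r² - a² with
coefficients that are positive when r² < 1.
-/

noncomputable section

/-- P(u) = 1 − 2au + r²u². -/
def P (a r u : ℝ) : ℝ := 1 - 2 * a * u + r ^ 2 * u ^ 2

/-- N(u) = (1+r²−2a²) − 2a(1−r²)u + (2a²−r⁴−r²)u². -/
def N (a r u : ℝ) : ℝ :=
  (1 + r ^ 2 - 2 * a ^ 2) - 2 * a * (1 - r ^ 2) * u + (2 * a ^ 2 - r ^ 4 - r ^ 2) * u ^ 2

/-- f(t) = log P(tanh(t/2)) − log(1 − tanh(t/2)²). -/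
def f (a r t : ℝ) : ℝ :=
  Real.log (P a r (Real.tanh (t / 2))) - Real.log (1 - Real.tanh (t / 2) ^ 2)

theorem Real.hasDerivAt_tanh (x : ℝ) : HasDerivAt Real.tanh (1 - Real.tanh x ^ 2) x := by
  have hc := (Real.cosh_pos x).ne'
  have h := (Real.hasDerivAt_sinh x).div (Real.hasDerivAt_cosh x) hc
  rw [show Real.sinh / Real.cosh = Real.tanh from
    funext fun y => (Real.tanh_eq_sinh_div_cosh y).symm] at h
  refine h.congr_deriv ?_
  rw [Real.tanh_eq_sinh_div_cosh]
  field_simp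

lemma hasDerivAt_tanh_half (t : ℝ) :
    HasDerivAt (fun s => Real.tanh (s / 2)) ((1 - Real.tanh (t / 2) ^ 2) / 2) t := by
  have h := (Real.hasDerivAt_tanh (t / 2)).comp t ((hasDerivAt_id t).div_const 2)
  exact h.congr_deriv (by ring)

lemma P_eq_sq_add (a r u : ℝ) : P a r u = (1 - a * u) ^ 2 + (r ^ 2 - a ^ 2) * u ^ 2 := by
  unfold P; ring

lemma P_pos {a r u : ℝ} (har : a ^ 2 ≤ r ^ 2) (hru : r ^ 2 * u ^ 2 < 1) : 0 < P a r u := by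
  have hau : 1 - a * u ≠ 0 := fun h => by nlinarith [sq_nonneg u]
  have hrest : 0 ≤ (r ^ 2 - a ^ 2) * u ^ 2 := mul_nonneg (by linarith) (sq_nonneg u)
  rw [P_eq_sq_add]
  positivity

lemma N_eq_sum (a r u : ℝ) : N a r u = (1 - r ^ 2) * (u - a) ^ 2 + (1 - r ^ 2) ^ 2 * (1 - u ^ 2)
    + (1 - r ^ 2 + 2 * (1 - u ^ 2)) * (r ^ 2 - a ^ 2) := by
  unfold N; ring

lemma N_pos {a r u : ℝ} (har : a ^ 2 ≤ r ^ 2) (hr : r ^ 2 < 1) (hu : u ^ 2 < 1) :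
    0 < N a r u := by
  have h1 : 0 < 1 - r ^ 2 := by linarith
  have h2 : 0 < 1 - u ^ 2 := by linarith
  have h3 : 0 ≤ r ^ 2 - a ^ 2 := by linarith
  rw [N_eq_sum]
  positivity

lemma hasDerivAt_P (a r u : ℝ) : HasDerivAt (P a r) (2 * (r ^ 2 * u - a)) u :=
  (((hasDerivAt_id u).const_mul (2 * a)).const_sub 1 |>.add
    ((hasDerivAt_pow 2 u).const_mul (r ^ 2))).congr_deriv (by ring)

def g (a r u : ℝ) : ℝ := (1 - u ^ 2) * (r ^ 2 * u - a) / P a r u + u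

lemma hasDerivAt_f {a r t : ℝ} (hP : P a r (Real.tanh (t / 2)) ≠ 0) :
    HasDerivAt (f a r) (g a r (Real.tanh (t / 2))) t := by
  set u := Real.tanh (t / 2)
  have hu : 1 - u ^ 2 ≠ 0 := by linarith [Real.tanh_sq_lt_one (t / 2)]
  have hF := ((hasDerivAt_P a r u).log hP).sub (((hasDerivAt_pow 2 u).const_sub 1).log hu)
  refine (hF.comp t (hasDerivAt_tanh_half t)).congr_deriv ?_
  unfold g
  field_simp
  ring

lemma hasDerivAt_g {a r u : ℝ} (hP : P a r u ≠ 0) :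
    HasDerivAt (g a r) (N a r u / P a r u ^ 2) u := by
  have hnum := ((hasDerivAt_pow 2 u).const_sub 1).mul
    (((hasDerivAt_id u).const_mul (r ^ 2)).sub_const a)
  refine ((hnum.div (hasDerivAt_P a r u) hP).add (hasDerivAt_id u)).congr_deriv ?_
  simp only [id, Pi.mul_apply]
  field_simp
  unfold P N
  ring

theorem second_derivative_formula (a r : ℝ) (har : a ^ 2 ≤ r ^ 2) (hr : r ^ 2 < 1) :
    (∀ t : ℝ, deriv (deriv (f a r)) t
        = ((1 - Real.tanh (t / 2) ^ 2) / 2) * N a r (Real.tanh (t / 2))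
            / P a r (Real.tanh (t / 2)) ^ 2) ∧
    (∀ t : ℝ, 0 < deriv (deriv (f a r)) t) ∧
    StrictConvexOn ℝ Set.univ (f a r) := by
  have hu (t : ℝ) : Real.tanh (t / 2) ^ 2 < 1 := Real.tanh_sq_lt_one _
  have hP (t : ℝ) : 0 < P a r (Real.tanh (t / 2)) := P_pos har (by nlinarith [hu t, sq_nonneg r])
  have hf' : deriv (f a r) = g a r ∘ fun t => Real.tanh (t / 2) :=
    funext fun t => (hasDerivAt_f (hP t).ne').deriv
  have hf'' (t : ℝ) : deriv (deriv (f a r)) t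
      = ((1 - Real.tanh (t / 2) ^ 2) / 2) * N a r (Real.tanh (t / 2))
          / P a r (Real.tanh (t / 2)) ^ 2 := by
    rw [hf', ((hasDerivAt_g (hP t).ne').comp t (hasDerivAt_tanh_half t)).deriv]
    ring
  have hpos (t : ℝ) : 0 < deriv (deriv (f a r)) t := by
    rw [hf'']
    have hN := N_pos har hr (hu t)
    have hPt := hP t
    have hu' : 0 < 1 - Real.tanh (t / 2) ^ 2 := by linarith [hu t]
    positivity
  refine ⟨hf'', hpos, strictConvexOn_univ_of_deriv2_pos ?_ fun t => by simpa using hpos t⟩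
  exact continuous_iff_continuousAt.2 fun t => (hasDerivAt_f (hP t).ne').continuousAt
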